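/- arXiv:2101.11139 — 4 statements merged into one kernel-verified Lean document; each statement's English description precedes it below -/
import Mathlib

section
/- Let X be a real-valued random variable and Z be a standard Gaussian random variable independent of X. If X and X+Z are independent, then X is almost surely constant. -/
/-!
Put `h x = E[arctan (x + Z)]`. Since `Z` is independent of `X`, conditioning on `X` gives
`E[f X * arctan (X + Z)] = E[f X * h X]` for bounded `f`, hence
`Cov(h X, arctan (X + Z)) = Var(h X)`. Independence of `X` and `X + Z` makes this covariance
vanish, so `h X` is a.s. constant, and `h` is strictly increasing, so `X` is a.s. constant.
-/

open MeasureTheory ProbabilityTheory Real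

lemma Real.abs_arctan_le (x : ℝ) : |arctan x| ≤ π / 2 :=
  abs_le.mpr ⟨(neg_pi_div_two_lt_arctan x).le, (arctan_lt_pi_div_two x).le⟩

theorem ProbabilityTheory.IndepFun.integral_comp_eq_integral_integral
    {Ω α β E : Type*} [MeasurableSpace Ω] [MeasurableSpace α] [MeasurableSpace β]
    [NormedAddCommGroup E] [NormedSpace ℝ E] {μ : Measure Ω} [IsFiniteMeasure μ]
    {X : Ω → α} {Z : Ω → β} (hXZ : IndepFun X Z μ) (hX : AEMeasurable X μ)
    (hZ : AEMeasurable Z μ) {F : α × β → E} (hF : Integrable F ((μ.map X).prod (μ.map Z))) :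
    ∫ ω, F (X ω, Z ω) ∂μ = ∫ ω, ∫ z, F (X ω, z) ∂(μ.map Z) ∂μ := by
  have hlaw := (indepFun_iff_map_prod_eq_prod_map_map hX hZ).mp hXZ
  rw [← integral_map (hX.prodMk hZ) (hlaw ▸ hF.aestronglyMeasurable), hlaw, integral_prod F hF,
    integral_map hX hF.integral_prod_left.aestronglyMeasurable]

noncomputable def smoothedArctan (ν : Measure ℝ) (x : ℝ) : ℝ := ∫ z, arctan (x + z) ∂ν

section smoothedArctan

variable (ν : Measure ℝ)

lemma integrable_arctan_const_add [IsFiniteMeasure ν] (x : ℝ) :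
    Integrable (fun z => arctan (x + z)) ν :=
  Integrable.of_bound (by fun_prop) (π / 2) (ae_of_all _ fun z => abs_arctan_le _)

lemma abs_smoothedArctan_le [IsProbabilityMeasure ν] (x : ℝ) : |smoothedArctan ν x| ≤ π / 2 := by
  simpa [smoothedArctan] using norm_integral_le_of_norm_le_const (μ := ν)
    (f := fun z => arctan (x + z)) (ae_of_all _ fun z => abs_arctan_le (x + z))

lemma measurable_smoothedArctan [SFinite ν] : Measurable (smoothedArctan ν) :=
  (measurable_arctan.comp measurable_add).stronglyMeasurable.integral_prod_right'.measurable

lemma strictMono_smoothedArctan [IsFiniteMeasure ν] [NeZero ν] : StrictMono (smoothedArctan ν) := by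
  intro a b hab
  have hpos : ∀ z, 0 < arctan (b + z) - arctan (a + z) := fun z =>
    sub_pos.mpr (arctan_strictMono (by linarith))
  have := (integral_pos_iff_support_of_nonneg (fun z => (hpos z).le)
    ((integrable_arctan_const_add ν b).sub (integrable_arctan_const_add ν a))).mpr (by
      rw [Set.eq_univ_of_forall (s := Function.support _) fun z => (hpos z).ne']
      exact Measure.measure_univ_pos.mpr (NeZero.ne ν))
  rw [integral_sub (integrable_arctan_const_add ν b) (integrable_arctan_const_add ν a)] at this
  exact sub_pos.mp this

end smoothedArctan

section Moments

variable {Ω : Type*} [MeasurableSpace Ω] {μ : Measure Ω}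

lemma memLp_arctan_comp [IsFiniteMeasure μ] {Y : Ω → ℝ} (hY : AEMeasurable Y μ) (p : ENNReal) :
    MemLp (fun ω => arctan (Y ω)) p μ :=
  MemLp.of_bound (measurable_arctan.comp_aemeasurable hY).aestronglyMeasurable (π / 2)
    (ae_of_all _ fun _ => abs_arctan_le _)

lemma memLp_smoothedArctan_comp [IsFiniteMeasure μ] (ν : Measure ℝ) [IsProbabilityMeasure ν]
    {Y : Ω → ℝ} (hY : AEMeasurable Y μ) (p : ENNReal) :
    MemLp (fun ω => smoothedArctan ν (Y ω)) p μ :=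
  MemLp.of_bound ((measurable_smoothedArctan ν).comp_aemeasurable hY).aestronglyMeasurable (π / 2)
    (ae_of_all _ fun _ => abs_smoothedArctan_le ν _)

variable {X Z : Ω → ℝ}

lemma ProbabilityTheory.IndepFun.integral_mul_arctan_add [IsFiniteMeasure μ]
    (hXZ : IndepFun X Z μ) (hX : AEMeasurable X μ) (hZ : AEMeasurable Z μ) {f : ℝ → ℝ}
    (hf : Measurable f) {C : ℝ} (hfC : ∀ x, |f x| ≤ C) :
    ∫ ω, f (X ω) * arctan (X ω + Z ω) ∂μ = ∫ ω, f (X ω) * smoothedArctan (μ.map Z) (X ω) ∂μ := by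
  have hF : Integrable (fun p : ℝ × ℝ => f p.1 * arctan (p.1 + p.2))
      ((μ.map X).prod (μ.map Z)) :=
    Integrable.of_bound (by fun_prop) (C * (π / 2)) (ae_of_all _ fun p => by
      rw [norm_mul]
      exact mul_le_mul (hfC _) (abs_arctan_le _) (norm_nonneg _) ((abs_nonneg _).trans (hfC 0)))
  rw [hXZ.integral_comp_eq_integral_integral hX hZ hF]
  simp only [integral_const_mul, smoothedArctan]

lemma ProbabilityTheory.IndepFun.covariance_smoothedArctan_arctan_add [IsProbabilityMeasure μ]
    (hXZ : IndepFun X Z μ) (hX : AEMeasurable X μ) (hZ : AEMeasurable Z μ) :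
    cov[fun ω => smoothedArctan (μ.map Z) (X ω), fun ω => arctan (X ω + Z ω); μ] =
      Var[fun ω => smoothedArctan (μ.map Z) (X ω); μ] := by
  have := Measure.isProbabilityMeasure_map hZ
  have hH := memLp_smoothedArctan_comp (μ.map Z) hX 2
  rw [covariance_eq_sub hH (memLp_arctan_comp (Y := fun ω => X ω + Z ω) (hX.add hZ) 2),
    variance_eq_sub hH]
  have hHA := hXZ.integral_mul_arctan_add hX hZ (measurable_smoothedArctan _)
    (abs_smoothedArctan_le (μ.map Z))
  have hA := hXZ.integral_mul_arctan_add hX hZ measurable_const (f := fun _ => 1) fun _ => le_rfl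
  simp only [Pi.mul_apply, Pi.pow_apply, one_mul, sq] at hHA hA ⊢
  rw [hHA, hA]

end Moments

lemma MeasureTheory.exists_ae_eq_const_of_injective_comp {Ω α β : Type*} [MeasurableSpace Ω]
    {μ : Measure Ω} [NeZero μ] {X : Ω → α} {g : α → β} (hg : Function.Injective g) {b : β}
    (h : ∀ᵐ ω ∂μ, g (X ω) = b) : ∃ a, X =ᵐ[μ] fun _ => a := by
  obtain ⟨ω₀, hω₀⟩ := h.exists
  exact ⟨X ω₀, h.mono fun ω hω => hg (hω.trans hω₀.symm)⟩

theorem stmt_2_general {Ω : Type*} [MeasurableSpace Ω] (μ : Measure Ω) [IsProbabilityMeasure μ]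
    (X Z : Ω → ℝ) (hX : Measurable X) (hZ : Measurable Z)
    (hXZindep : IndepFun X Z μ)
    (hindep : IndepFun X (fun ω => X ω + Z ω) μ) :
    ∃ c : ℝ, X =ᵐ[μ] fun _ => c := by
  have := Measure.isProbabilityMeasure_map (μ := μ) hZ.aemeasurable
  have hH := memLp_smoothedArctan_comp (μ.map Z) (hX.aemeasurable (μ := μ)) 2
  have hvar : Var[fun ω => smoothedArctan (μ.map Z) (X ω); μ] = 0 := by
    rw [← hXZindep.covariance_smoothedArctan_arctan_add hX.aemeasurable hZ.aemeasurable]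
    exact (hindep.comp (measurable_smoothedArctan _) measurable_arctan).covariance_eq_zero hH
      (memLp_arctan_comp (Y := fun ω => X ω + Z ω) (hX.add hZ).aemeasurable 2)
  exact exists_ae_eq_const_of_injective_comp (strictMono_smoothedArctan _).injective
    (ae_eq_integral_of_variance_eq_zero hH hvar)

/-- If `Z` is standard Gaussian independent of the real random variable `X`, and `X` is
independent of `X + Z`, then `X` is almost surely constant. -/
theorem stmt_2 {Ω : Type*} [MeasurableSpace Ω] (μ : Measure Ω) [IsProbabilityMeasure μ]
    (X Z : Ω → ℝ) (hX : Measurable X) (hZ : Measurable Z)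
    (hZgauss : μ.map Z = gaussianReal 0 1)
    (hXZindep : IndepFun X Z μ)
    (hindep : IndepFun X (fun ω => X ω + Z ω) μ) :
    ∃ c : ℝ, X =ᵐ[μ] fun _ => c :=
  stmt_2_general μ X Z hX hZ hXZindep hindep
end

section
/- Define 𝖢(x) = (1/2)·log₂(1+x) for x ≥ 0. For nonnegative reals S₁₂, S₁₃, S₂₃ with S₁₂ ≥ S₂₃, the value max over ρ∈[0,1] of min{ 𝖢(S₁₃ + S₂₃ + 2ρ√(S₁₃S₂₃)), 𝖢((1−ρ²)(S₁₃+S₁₂)) } equals 𝖢( (√(S₁₂S₂₃) + √(S₁₃(S₁₃+S₁₂−S₂₃)))² / (S₁₃+S₁₂) ). -/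
/-!
The first argument of the minimum is increasing in `ρ` and the second decreasing, so the maximum
of the minimum over `[0, 1]` is attained where they cross. The crossing point solves a quadratic in
`ρ`, and at that point both arguments equal `(√(S₁₂S₂₃) + √(S₁₃(S₁₃+S₁₂−S₂₃)))² / (S₁₃+S₁₂)`.
-/

open Real

/-- `𝖢(x) = (1/2)·log₂(1+x)`. -/
noncomputable def Cfun (x : ℝ) : ℝ := (1/2) * Real.logb 2 (1 + x)

open Set

lemma Cfun_monotoneOn : MonotoneOn Cfun (Ici 0) := fun x hx y _ hxy => by
  have : logb 2 (1 + x) ≤ logb 2 (1 + y) :=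
    logb_le_logb_of_le one_lt_two (by linarith [mem_Ici.mp hx]) (by linarith)
  unfold Cfun
  linarith

lemma monotoneOn_Cfun_add_two_mul_mul {a b : ℝ} (ha : 0 ≤ a) (hb : 0 ≤ b) :
    MonotoneOn (fun ρ => Cfun (a + 2 * ρ * b)) (Ici 0) := by
  refine Cfun_monotoneOn.comp (fun x _ y _ hxy => ?_) fun x hx => ?_
  · gcongr
  · have := mul_nonneg (mem_Ici.mp hx) hb
    simp only [mem_Ici]
    linarith

lemma antitoneOn_Cfun_one_sub_sq_mul {T : ℝ} (hT : 0 ≤ T) :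
    AntitoneOn (fun ρ => Cfun ((1 - ρ ^ 2) * T)) (Icc 0 1) := by
  refine Cfun_monotoneOn.comp_AntitoneOn (fun x hx y _ hxy => ?_) fun x hx => ?_
  · have := hx.1
    gcongr
  · exact mul_nonneg (by nlinarith [hx.1, hx.2]) hT

theorem isGreatest_image_min_of_monotoneOn_of_antitoneOn {α β : Type*} [LinearOrder α]
    [LinearOrder β] {s : Set α} {f g : α → β} {c : α} (hf : MonotoneOn f s)
    (hg : AntitoneOn g s) (hc : c ∈ s) (hfg : f c = g c) :
    IsGreatest ((fun x => min (f x) (g x)) '' s) (f c) := by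
  refine ⟨⟨c, hc, by simp [hfg]⟩, ?_⟩
  rintro _ ⟨x, hx, rfl⟩
  rcases le_total x c with hxc | hcx
  · exact (min_le_left _ _).trans (hf hx hc hxc)
  · exact (min_le_right _ _).trans (hfg ▸ hg hc hx hcx)

/-- The nonnegative root of `S₁₃ + S₂₃ + 2ρ√(S₁₃S₂₃) = (1 - ρ²)(S₁₃ + S₁₂)`; the discriminant
simplifies because `S₁₃S₂₃ + (S₁₃ + S₁₂)(S₁₂ - S₂₃) = S₁₂(S₁₃ + S₁₂ - S₂₃)`. -/
noncomputable def relayCrossing (S12 S13 S23 : ℝ) : ℝ :=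
  (√(S12 * (S13 + S12 - S23)) - √(S13 * S23)) / (S13 + S12)

section relayCrossing

variable {S12 S13 S23 : ℝ}

lemma relayCrossing_mem_Icc (h13 : 0 ≤ S13) (h23 : 0 ≤ S23) (h : S23 ≤ S12) :
    relayCrossing S12 S13 S23 ∈ Icc 0 1 := by
  have hT : 0 ≤ S13 + S12 := by linarith
  have hle : √(S13 * S23) ≤ √(S12 * (S13 + S12 - S23)) :=
    sqrt_le_sqrt (by nlinarith [mul_le_mul_of_nonneg_left h h13])
  have hge : √(S12 * (S13 + S12 - S23)) ≤ S13 + S12 :=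
    (sqrt_le_left hT).mpr (by nlinarith)
  exact ⟨div_nonneg (by linarith) hT,
    div_le_one_of_le₀ (by linarith [sqrt_nonneg (S13 * S23)]) hT⟩

lemma relayCrossing_cross (h13 : 0 ≤ S13) (h23 : 0 ≤ S23) (h : S23 ≤ S12) :
    S13 + S23 + 2 * relayCrossing S12 S13 S23 * √(S13 * S23)
      = (1 - relayCrossing S12 S13 S23 ^ 2) * (S13 + S12) := by
  rcases (add_nonneg h13 (h23.trans h)).eq_or_lt with hT | hT
  · obtain ⟨rfl, rfl⟩ : S13 = 0 ∧ S12 = 0 := by constructor <;> linarith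
    obtain rfl : S23 = 0 := by linarith
    simp
  have hu := sq_sqrt (mul_nonneg h13 h23)
  have hw := sq_sqrt (mul_nonneg (h23.trans h) (by linarith : 0 ≤ S13 + S12 - S23))
  unfold relayCrossing
  field_simp
  linear_combination hw - hu

lemma relayCrossing_value (h13 : 0 ≤ S13) (h23 : 0 ≤ S23) (h : S23 ≤ S12) :
    (1 - relayCrossing S12 S13 S23 ^ 2) * (S13 + S12)
      = (√(S12 * S23) + √(S13 * (S13 + S12 - S23))) ^ 2 / (S13 + S12) := by
  rcases (add_nonneg h13 (h23.trans h)).eq_or_lt with hT | hT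
  · simp [← hT]
  have hu := sq_sqrt (mul_nonneg h13 h23)
  have hw := sq_sqrt (mul_nonneg (h23.trans h) (by linarith : 0 ≤ S13 + S12 - S23))
  have ha := sq_sqrt (mul_nonneg (h23.trans h) h23)
  have hb := sq_sqrt (mul_nonneg h13 (by linarith : 0 ≤ S13 + S12 - S23))
  have hab : √(S12 * S23) * √(S13 * (S13 + S12 - S23))
      = √(S13 * S23) * √(S12 * (S13 + S12 - S23)) := by
    rw [← sqrt_mul (mul_nonneg (h23.trans h) h23), ← sqrt_mul (mul_nonneg h13 h23)]
    ring_nf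
  unfold relayCrossing
  field_simp
  linear_combination -hw - hu - ha - hb - 2 * hab

end relayCrossing

theorem stmt_3_general (S12 S13 S23 : ℝ) (h13 : 0 ≤ S13) (h23 : 0 ≤ S23)
    (h : S12 ≥ S23) :
    IsGreatest
      ((fun ρ : ℝ =>
          min (Cfun (S13 + S23 + 2 * ρ * Real.sqrt (S13 * S23)))
            (Cfun ((1 - ρ^2) * (S13 + S12)))) '' Set.Icc 0 1)
      (Cfun ((Real.sqrt (S12 * S23) + Real.sqrt (S13 * (S13 + S12 - S23)))^2
        / (S13 + S12))) := by
  have hcross := relayCrossing_cross h13 h23 h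
  rw [← relayCrossing_value h13 h23 h, ← hcross]
  exact isGreatest_image_min_of_monotoneOn_of_antitoneOn
    ((monotoneOn_Cfun_add_two_mul_mul (by linarith) (sqrt_nonneg _)).mono Icc_subset_Ici_self)
    (antitoneOn_Cfun_one_sub_sq_mul (by linarith))
    (relayCrossing_mem_Icc h13 h23 h) (congrArg Cfun hcross)

/-- Closed form of the cut-set bound for the Gaussian relay channel when `S₁₂ ≥ S₂₃`:
the maximum over `ρ ∈ [0,1]` of
`min{𝖢(S₁₃+S₂₃+2ρ√(S₁₃S₂₃)), 𝖢((1−ρ²)(S₁₃+S₁₂))}` equals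
`𝖢((√(S₁₂S₂₃)+√(S₁₃(S₁₃+S₁₂−S₂₃)))²/(S₁₃+S₁₂))`. -/
theorem stmt_3 (S12 S13 S23 : ℝ) (h12 : 0 ≤ S12) (h13 : 0 ≤ S13) (h23 : 0 ≤ S23)
    (h : S12 ≥ S23) :
    IsGreatest
      ((fun ρ : ℝ =>
          min (Cfun (S13 + S23 + 2 * ρ * Real.sqrt (S13 * S23)))
            (Cfun ((1 - ρ^2) * (S13 + S12)))) '' Set.Icc 0 1)
      (Cfun ((Real.sqrt (S12 * S23) + Real.sqrt (S13 * (S13 + S12 - S23)))^2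
        / (S13 + S12))) :=
  stmt_3_general S12 S13 S23 h13 h23 h
end

section
/- For positive reals S₁₂, S₁₃, S₂₃, the quadratic λ² (S₁₂+1) − λ(S₂₃S₁₂(1−ρ²) + S₁₃ + S₂₃ + S₁₂ + 2 + 2ρ√(S₁₃S₂₃)) + (2ρ√(S₁₃S₂₃) + S₁₃ + S₂₃ + 1) = 0 in λ, with ρ ∈ [−1,1], has two real roots, i.e., its discriminant is nonnegative. -/
/-!
Write the quadratic as `a λ² − b λ + c` with `a = S₁₂ + 1` and `c = S₁₃ + S₂₃ + 1 + 2ρ√(S₁₃S₂₃)`.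
By AM-GM `2√(S₁₃S₂₃) ≤ S₁₃ + S₂₃`, so `c ≥ 1`, and `b = a + c + S₁₂S₂₃(1 − ρ²) ≥ a + c`.
Hence `b² ≥ (a + c)² ≥ 4ac`.
-/

lemma four_mul_le_sq_of_add_le {a b c : ℝ} (hac : 0 ≤ a + c) (hb : a + c ≤ b) :
    4 * a * c ≤ b ^ 2 :=
  (four_mul_le_sq_add a c).trans (pow_le_pow_left₀ hac hb 2)

lemma Real.two_mul_sqrt_mul_le_add {x y : ℝ} (hx : 0 ≤ x) (hy : 0 ≤ y) :
    2 * √(x * y) ≤ x + y := by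
  have h := two_mul_le_add_sq √x √y
  rwa [Real.sq_sqrt hx, Real.sq_sqrt hy, mul_assoc, ← Real.sqrt_mul hx] at h

lemma Real.add_add_two_mul_mul_sqrt_mul_nonneg {x y ρ : ℝ} (hx : 0 ≤ x) (hy : 0 ≤ y)
    (hρ : -1 ≤ ρ) : 0 ≤ x + y + 2 * ρ * √(x * y) := by
  have hρs : -√(x * y) ≤ ρ * √(x * y) := by
    simpa using mul_le_mul_of_nonneg_right hρ (Real.sqrt_nonneg (x * y))
  linarith [Real.two_mul_sqrt_mul_le_add hx hy]

/-- The quadratic `λ²(S₁₂+1) − λ(S₂₃S₁₂(1−ρ²)+S₁₃+S₂₃+S₁₂+2+2ρ√(S₁₃S₂₃))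
+ (2ρ√(S₁₃S₂₃)+S₁₃+S₂₃+1) = 0` in `λ`, with `ρ ∈ [−1,1]` and positive `S₁₂,S₁₃,S₂₃`,
has two real roots, i.e., its discriminant is nonnegative. -/
theorem stmt_17 (S12 S13 S23 ρ : ℝ) (h12 : 0 < S12) (h13 : 0 < S13) (h23 : 0 < S23)
    (hρ : ρ ∈ Set.Icc (-1 : ℝ) 1) :
    0 ≤ (S23 * S12 * (1 - ρ^2) + S13 + S23 + S12 + 2 + 2 * ρ * Real.sqrt (S13 * S23))^2
        - 4 * (S12 + 1) * (2 * ρ * Real.sqrt (S13 * S23) + S13 + S23 + 1) := by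
  obtain ⟨hρ_ge, hρ_le⟩ := hρ
  have hc := Real.add_add_two_mul_mul_sqrt_mul_nonneg h13.le h23.le hρ_ge
  have hρ_sq : 0 ≤ 1 - ρ ^ 2 := by nlinarith
  have hgap : 0 ≤ S23 * S12 * (1 - ρ ^ 2) := by positivity
  exact sub_nonneg.mpr (four_mul_le_sq_of_add_le (by linarith) (by linarith))
end

section
/- Let p(x, y_r) be a joint distribution on {0,1}×{0,1} and let f(p₀₀,p₀₁,p₁₀,p₁₁) be any real-valued function satisfying the symmetry f(p₀₀,p₀₁,p₁₀,p₁₁) = f(p₁₁,p₁₀,p₀₁,p₀₀). Define g(c) = max{ f(p₀₀,p₀₁,p₁₀,p₁₁) : p₀₁+p₁₀ = c } over the probability simplex, and let 𝒞_c[g] be the upper concave envelope of g on [0,1] and 𝒞_p[f] the upper concave envelope of f on the simplex. If f is continuous, then 𝒞_c[g](ρ) = 𝒞_p[f]((1−ρ)/2, ρ/2, ρ/2, (1−ρ)/2) for every ρ ∈ [0,1]. -/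
open Finset

/-- The upper concave envelope of `h` on a set `s`: the pointwise smallest concave
function on `s` dominating `h` on `s`, evaluated at `x`. -/
noncomputable def concaveEnvelope {E : Type*} [AddCommMonoid E] [Module ℝ E]
    (s : Set E) (h : E → ℝ) (x : E) : ℝ :=
  sInf {t : ℝ | ∃ φ : E → ℝ, ConcaveOn ℝ s φ ∧ (∀ y ∈ s, h y ≤ φ y) ∧ t = φ x}

/-- The probability simplex on four points `(p₀₀, p₀₁, p₁₀, p₁₁)`. -/
def simplex4 : Set (Fin 4 → ℝ) := {p | (∀ i, 0 ≤ p i) ∧ ∑ i, p i = 1}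

/- Every concave majorant `ψ` of `g` on `[0,1]` lifts to the concave majorant `ψ ∘ π` of `f` on the
simplex, where `π p = p₀₁ + p₁₀`, because `f ≤ g ∘ π`. Conversely every concave majorant `φ` of `f`
restricts along the affine curve `σ c = ((1-c)/2, c/2, c/2, (1-c)/2)` to a concave majorant
`φ ∘ σ` of `g`: for `p` in the fibre over `c`, the point `σ c` is the midpoint of `p` and its
reflection `(p₁₁, p₁₀, p₀₁, p₀₀)`, where `f` takes the same value, so concavity gives
`f p ≤ φ (σ c)`. Hence both envelopes are infima of the same set of values. -/

section Reduction

variable {E F : Type*}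

noncomputable def fiberSup (s : Set E) (π : E → F) (h : E → ℝ) (c : F) : ℝ :=
  sSup (h '' {y | y ∈ s ∧ π y = c})

theorem le_fiberSup {s : Set E} {π : E → F} {h : E → ℝ} (hbdd : BddAbove (h '' s)) {y : E}
    (hy : y ∈ s) : h y ≤ fiberSup s π h (π y) :=
  le_csSup (hbdd.mono (Set.image_mono fun _ hz => hz.1)) ⟨y, ⟨hy, rfl⟩, rfl⟩

variable [AddCommGroup E] [Module ℝ E]

theorem fiberSup_le_of_midpoint {s : Set E} {π : E → F} {h φ : E → ℝ} {σ : F → E}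
    (hφ : ConcaveOn ℝ s φ) (hhφ : ∀ y ∈ s, h y ≤ φ y)
    (hrefl : ∀ y ∈ s, ∃ z ∈ s, h z = h y ∧ σ (π y) = midpoint ℝ y z)
    {c : F} (hσc : σ c ∈ s) (hπσc : π (σ c) = c) : fiberSup s π h c ≤ φ (σ c) := by
  refine csSup_le ⟨_, σ c, ⟨hσc, hπσc⟩, rfl⟩ ?_
  rintro _ ⟨y, ⟨hy, rfl⟩, rfl⟩
  obtain ⟨z, hz, hhz, hmid⟩ := hrefl y hy
  rw [hmid]
  exact (le_min (hhφ y hy) (hhz ▸ hhφ z hz)).trans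
    (hφ.min_le_of_mem_segment hy hz (midpoint_mem_segment y z))

variable [AddCommGroup F] [Module ℝ F]

theorem concaveEnvelope_eq_of_section {s : Set E} {t : Set F} {h : E → ℝ} {g : F → ℝ}
    (hs : Convex ℝ s) (ht : Convex ℝ t) (π : E →ₗ[ℝ] F) (σ : F →ᵃ[ℝ] E)
    (hπσ : ∀ c, π (σ c) = c) (hπ : Set.MapsTo π s t) (hσ : Set.MapsTo σ t s)
    (h_le : ∀ y ∈ s, h y ≤ g (π y))
    (g_le : ∀ φ : E → ℝ, ConcaveOn ℝ s φ → (∀ y ∈ s, h y ≤ φ y) → ∀ c ∈ t, g c ≤ φ (σ c))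
    (x : F) : concaveEnvelope t g x = concaveEnvelope s h (σ x) := by
  unfold concaveEnvelope
  congr 1
  ext r
  constructor
  · rintro ⟨ψ, hψ, hgψ, rfl⟩
    exact ⟨ψ ∘ π, (hψ.comp_linearMap π).subset hπ.subset_preimage hs,
      fun y hy => (h_le y hy).trans (hgψ _ (hπ hy)), by simp [hπσ]⟩
  · rintro ⟨φ, hφ, hhφ, rfl⟩
    exact ⟨φ ∘ σ, (hφ.comp_affineMap σ).subset hσ.subset_preimage ht, g_le φ hφ hhφ, rfl⟩

end Reduction

namespace simplex4

def offDiagonalMass : (Fin 4 → ℝ) →ₗ[ℝ] ℝ :=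
  LinearMap.proj (R := ℝ) (φ := fun _ => ℝ) 1 + LinearMap.proj 2

@[simp]
theorem offDiagonalMass_apply (p : Fin 4 → ℝ) : offDiagonalMass p = p 1 + p 2 := rfl

noncomputable def symmPoint : ℝ →ᵃ[ℝ] (Fin 4 → ℝ) :=
  AffineMap.lineMap ![1 / 2, 0, 0, 1 / 2] ![0, 1 / 2, 1 / 2, 0]

theorem symmPoint_apply (c : ℝ) : symmPoint c = ![(1 - c) / 2, c / 2, c / 2, (1 - c) / 2] := by
  ext i
  fin_cases i <;> simp [symmPoint, AffineMap.lineMap_apply] <;> ring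

theorem offDiagonalMass_symmPoint (c : ℝ) : offDiagonalMass (symmPoint c) = c := by
  simp [symmPoint_apply]

theorem mem_iff {p : Fin 4 → ℝ} : p ∈ simplex4 ↔ (∀ i, 0 ≤ p i) ∧ p 0 + p 1 + p 2 + p 3 = 1 := by
  simp [simplex4, Fin.sum_univ_four]

theorem symmPoint_mem {c : ℝ} (hc : c ∈ Set.Icc (0 : ℝ) 1) : symmPoint c ∈ simplex4 := by
  obtain ⟨hc0, hc1⟩ := hc
  refine mem_iff.2 ⟨fun i => ?_, ?_⟩
  · fin_cases i <;> simp [symmPoint_apply] <;> linarith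
  · simp [symmPoint_apply]; ring

theorem offDiagonalMass_mem_Icc {p : Fin 4 → ℝ} (hp : p ∈ simplex4) :
    offDiagonalMass p ∈ Set.Icc (0 : ℝ) 1 := by
  obtain ⟨hp0, hp1⟩ := mem_iff.1 hp
  rw [offDiagonalMass_apply]
  constructor <;> linarith [hp0 0, hp0 1, hp0 2, hp0 3]

theorem comp_rev_mem {p : Fin 4 → ℝ} (hp : p ∈ simplex4) : p ∘ Fin.rev ∈ simplex4 :=
  ⟨fun _ => hp.1 _, (Equiv.sum_comp Fin.revPerm p).trans hp.2⟩

theorem symmPoint_offDiagonalMass {p : Fin 4 → ℝ} (hp : p ∈ simplex4) :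
    symmPoint (offDiagonalMass p) = midpoint ℝ p (p ∘ Fin.rev) := by
  have hsum := (mem_iff.1 hp).2
  ext i
  fin_cases i <;>
    simp [symmPoint_apply, midpoint_eq_smul_add, Fin.rev] <;> linarith

end simplex4

open simplex4 in
theorem stmt_18_general (f : ℝ → ℝ → ℝ → ℝ → ℝ)
    (hcont : Continuous fun p : Fin 4 → ℝ => f (p 0) (p 1) (p 2) (p 3))
    (hsym : ∀ a b c d : ℝ, f a b c d = f d c b a)
    (ρ : ℝ) :
    concaveEnvelope (Set.Icc (0:ℝ) 1)
        (fun c => sSup ((fun p : Fin 4 → ℝ => f (p 0) (p 1) (p 2) (p 3))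
          '' {p | p ∈ simplex4 ∧ p 1 + p 2 = c})) ρ
      = concaveEnvelope simplex4 (fun p => f (p 0) (p 1) (p 2) (p 3))
          ![(1 - ρ) / 2, ρ / 2, ρ / 2, (1 - ρ) / 2] := by
  set h : (Fin 4 → ℝ) → ℝ := fun p => f (p 0) (p 1) (p 2) (p 3)
  have hbdd : BddAbove (h '' simplex4) :=
    (isCompact_stdSimplex ℝ (Fin 4)).bddAbove_image hcont.continuousOn
  have hrefl : ∀ p ∈ simplex4, ∃ q ∈ simplex4,
      h q = h p ∧ symmPoint (offDiagonalMass p) = midpoint ℝ p q :=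
    fun p hp => ⟨p ∘ Fin.rev, comp_rev_mem hp, hsym _ _ _ _ |>.symm, symmPoint_offDiagonalMass hp⟩
  rw [← symmPoint_apply]
  change concaveEnvelope _ (fiberSup simplex4 offDiagonalMass h) ρ = _
  exact concaveEnvelope_eq_of_section (convex_stdSimplex ℝ _) (convex_Icc 0 1) offDiagonalMass
    symmPoint offDiagonalMass_symmPoint (fun _ => offDiagonalMass_mem_Icc)
    (fun _ => symmPoint_mem) (fun _ => le_fiberSup hbdd)
    (fun _ hφ hhφ _ hc => fiberSup_le_of_midpoint hφ hhφ hrefl (symmPoint_mem hc)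
      (offDiagonalMass_symmPoint _)) ρ

/-- Dimension reduction for symmetric functions: if `f` is continuous and satisfies the
symmetry `f(p₀₀,p₀₁,p₁₀,p₁₁) = f(p₁₁,p₁₀,p₀₁,p₀₀)`, and
`g(c) = max{f(p) : p ∈ simplex, p₀₁+p₁₀ = c}`, then the upper concave envelope of `g` on
`[0,1]` at `ρ` equals the upper concave envelope of `f` on the simplex at the symmetric
point `((1−ρ)/2, ρ/2, ρ/2, (1−ρ)/2)`. -/
theorem stmt_18 (f : ℝ → ℝ → ℝ → ℝ → ℝ)
    (hcont : Continuous fun p : Fin 4 → ℝ => f (p 0) (p 1) (p 2) (p 3))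
    (hsym : ∀ a b c d : ℝ, f a b c d = f d c b a)
    (ρ : ℝ) (hρ : ρ ∈ Set.Icc (0:ℝ) 1) :
    concaveEnvelope (Set.Icc (0:ℝ) 1)
        (fun c => sSup ((fun p : Fin 4 → ℝ => f (p 0) (p 1) (p 2) (p 3))
          '' {p | p ∈ simplex4 ∧ p 1 + p 2 = c})) ρ
      = concaveEnvelope simplex4 (fun p => f (p 0) (p 1) (p 2) (p 3))
          ![(1 - ρ) / 2, ρ / 2, ρ / 2, (1 - ρ) / 2] :=
  stmt_18_general f hcont hsym ρ
end
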